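/- Fix ε ∈ (0,1), an interval J, and a > 0. Define weights W_N(a,J,ε) inductively: W₀ = a·𝟏_J, and on each dyadic subinterval I of J at level N on which W_N is constant, set W_{N+1} = (E_I W_N)((1−ε)𝟏_{I⁻} + (1+ε)𝟏_{I⁺}). Let W(a,J,ε) be the weak-* limit. Then the dyadic testing functional for the pair (W(a,J,ε), W(1,J,−ε)) equals exactly a², namely γ(W(a,J,ε), W(1,J,−ε); J) = ε² a² ∑_{n=0}^∞ (1−ε²)ⁿ = a². -/

import Mathlib

open MeasureTheory Set Finset

/-- The `N`-th stage `W_N(a,J,ε)` of the Nazarov–Volberg Bellman weights on the interval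
`J = [α, α+L)`: starting from `W₀ = a·𝟏_J`, each dyadic interval redistributes its average,
with factor `1−ε` on the left half and `1+ε` on the right half.  Explicitly, `W_N` equals
`a` times the product over the first `N` dyadic generations of the factors `1 ± ε` determined
by the binary digits of `(x−α)/L`. -/
noncomputable def WNwt (a ε α L : ℝ) (N : ℕ) (x : ℝ) : ℝ :=
  if x ∈ Ico α (α + L) then
    a * ∏ i ∈ Finset.range N,
      (1 + ε * (if ⌊(x - α) / L * 2 ^ (i + 1)⌋ % 2 = 0 then -1 else 1))
  else 0

/-- The average of `W_N(a,J,ε)` over the `j`-th dyadic subinterval of `J = [α,α+L)` at depth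
`n`, namely `E_{I_{n,j}} W_N` with `I_{n,j} = [α + jL/2ⁿ, α + (j+1)L/2ⁿ)`. -/
noncomputable def dyAvgW (a ε α L : ℝ) (N n j : ℕ) : ℝ :=
  ((2:ℝ) ^ n / L) *
    ∫ x in (α + (j : ℝ) * L / 2 ^ n)..(α + ((j : ℝ) + 1) * L / 2 ^ n), WNwt a ε α L N x

noncomputable def Pprod (ε : ℝ) (N j : ℕ) : ℝ :=
  ∏ i ∈ Finset.range N, (1 + ε * (if (j / 2 ^ (N - 1 - i)) % 2 = 0 then (-1:ℝ) else 1))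

lemma floor_key (α L : ℝ) (hL : 0 < L) (N j i : ℕ) (hi : i < N)
    (x : ℝ) (hx1 : α + (j : ℝ) * L / 2 ^ N ≤ x) (hx2 : x < α + ((j:ℝ)+1) * L / 2 ^ N) :
    ⌊(x - α) / L * 2 ^ (i + 1)⌋ = (j / 2 ^ (N - 1 - i) : ℕ) := by
  set m := N - 1 - i with hmdef
  have hm : i + 1 + m = N := by omega
  set q := j / 2 ^ m with hq
  have h1 : q * 2 ^ m ≤ j := Nat.div_mul_le_self j _
  have h2 : j < (q + 1) * 2 ^ m := by
    rw [add_mul, one_mul]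
    exact Nat.lt_div_mul_add (pow_pos (by norm_num) m)
  have hpow : (2:ℝ) ^ N = 2 ^ (i+1) * 2 ^ m := by rw [← pow_add, hm]
  have hpm : (0:ℝ) < 2 ^ m := by positivity
  have hpi : (0:ℝ) < 2 ^ (i+1) := by positivity
  have hpN : (0:ℝ) < 2 ^ N := by positivity
  have h1' : (q:ℝ) * 2 ^ m ≤ j := by exact_mod_cast h1
  have h2' : (j:ℝ) < (q + 1) * 2 ^ m := by exact_mod_cast h2
  have hy1 : (j:ℝ) * L / 2 ^ N ≤ x - α := by linarith
  have hy2 : x - α < ((j:ℝ)+1) * L / 2 ^ N := by linarith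
  have h2'' : ((j:ℝ)+1) ≤ ((q:ℝ)+1)*2^m := by
    have : j + 1 ≤ (q+1)*2^m := h2
    exact_mod_cast this
  rw [Int.floor_eq_iff]
  constructor
  · push_cast
    rw [div_mul_eq_mul_div, le_div_iff₀ hL]
    rw [div_le_iff₀ hpN, hpow] at hy1
    have k1 : (q:ℝ)*2^m*L ≤ (x-α)*(2^(i+1)*2^m) :=
      le_trans (mul_le_mul_of_nonneg_right h1' hL.le) hy1
    nlinarith [hpm]
  · push_cast
    rw [div_mul_eq_mul_div, div_lt_iff₀ hL]
    rw [lt_div_iff₀ hpN, hpow] at hy2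
    have k1 : (x-α)*(2^(i+1)*2^m) < ((q:ℝ)+1)*2^m*L :=
      lt_of_lt_of_le hy2 (by nlinarith)
    nlinarith [hpm]

lemma avg_eq (a ε α L : ℝ) (hL : 0 < L) (N j : ℕ) (hj : j < 2 ^ N) :
    dyAvgW a ε α L N N j = a * Pprod ε N j := by
  unfold dyAvgW
  have hpN : (0:ℝ) < 2 ^ N := by positivity
  set s := α + (j:ℝ) * L / 2 ^ N with hs
  set t := α + ((j:ℝ)+1) * L / 2 ^ N with ht
  have hst : s ≤ t := by
    rw [hs, ht]
    have h : (j:ℝ) * L / 2^N ≤ ((j:ℝ)+1) * L / 2^N := by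
      apply div_le_div_of_nonneg_right ?_ hpN.le
      nlinarith
    linarith
  have hconst : ∀ x ∈ Ico s t, WNwt a ε α L N x = a * Pprod ε N j := by
    intro x hx
    have hj1 : (j:ℝ) + 1 ≤ 2 ^ N := by exact_mod_cast Nat.succ_le_of_lt hj
    have hmem : x ∈ Ico α (α + L) := by
      constructor
      · have h0 : (0:ℝ) ≤ (j:ℝ) * L / 2 ^ N := by positivity
        have : α ≤ s := by rw [hs]; linarith
        exact le_trans this hx.1
      · have : t ≤ α + L := by
          rw [ht]
          have : ((j:ℝ)+1) * L / 2^N ≤ L := by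
            rw [div_le_iff₀ hpN]; nlinarith
          linarith
        exact lt_of_lt_of_le hx.2 this
    rw [WNwt, if_pos hmem, Pprod]
    congr 1
    apply Finset.prod_congr rfl
    intro i hi
    have hfl := floor_key α L hL N j i (Finset.mem_range.mp hi) x hx.1 hx.2
    rw [hfl]
    have hcond : ((((j / 2 ^ (N - 1 - i) : ℕ)) : ℤ) % 2 = 0) ↔
        ((j / 2 ^ (N - 1 - i)) % 2 = 0) := by omega
    simp only [hcond]
  have hts : t - s = L / 2 ^ N := by rw [hs, ht]; field_simp; ring
  rw [intervalIntegral.integral_of_le hst, MeasureTheory.integral_Ioc_eq_integral_Ioo,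
    setIntegral_congr_fun measurableSet_Ioo (fun x hx => hconst x (Ioo_subset_Ico_self hx)),
    setIntegral_const, measureReal_def, Real.volume_Ioo, smul_eq_mul,
    ENNReal.toReal_ofReal (by linarith : (0:ℝ) ≤ t - s), hts]
  field_simp

lemma div_pow_succ (j k : ℕ) : (2 * j) / 2 ^ (k + 1) = j / 2 ^ k := by
  rw [pow_succ', Nat.mul_div_mul_left _ _ (by norm_num)]

lemma div_pow_succ' (j k : ℕ) : (2 * j + 1) / 2 ^ (k + 1) = j / 2 ^ k := by
  rw [pow_succ', ← Nat.div_div_eq_div_mul]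
  congr 1
  omega

lemma Pprod_left (ε : ℝ) (N j : ℕ) : Pprod ε (N + 1) (2 * j) = (1 - ε) * Pprod ε N j := by
  unfold Pprod
  rw [Finset.prod_range_succ]
  have hlast : (2 * j) / 2 ^ (N + 1 - 1 - N) % 2 = 0 := by
    have h : N + 1 - 1 - N = 0 := by omega
    rw [h, pow_zero, Nat.div_one]; omega
  rw [if_pos hlast]
  have hprod : (∏ x ∈ Finset.range N,
        (1 + ε * if 2 * j / 2 ^ (N + 1 - 1 - x) % 2 = 0 then (-1:ℝ) else 1))
      = ∏ i ∈ Finset.range N, (1 + ε * if j / 2 ^ (N - 1 - i) % 2 = 0 then (-1:ℝ) else 1) := by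
    apply Finset.prod_congr rfl
    intro i hi
    have hi' := Finset.mem_range.mp hi
    have h2 : N + 1 - 1 - i = (N - 1 - i) + 1 := by omega
    rw [h2, div_pow_succ]
  rw [hprod]; ring

lemma Pprod_right (ε : ℝ) (N j : ℕ) : Pprod ε (N + 1) (2 * j + 1) = (1 + ε) * Pprod ε N j := by
  unfold Pprod
  rw [Finset.prod_range_succ]
  have hlast : ¬ ((2 * j + 1) / 2 ^ (N + 1 - 1 - N) % 2 = 0) := by
    have h : N + 1 - 1 - N = 0 := by omega
    rw [h, pow_zero, Nat.div_one]; omega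
  rw [if_neg hlast]
  have hprod : (∏ x ∈ Finset.range N,
        (1 + ε * if (2 * j + 1) / 2 ^ (N + 1 - 1 - x) % 2 = 0 then (-1:ℝ) else 1))
      = ∏ i ∈ Finset.range N, (1 + ε * if j / 2 ^ (N - 1 - i) % 2 = 0 then (-1:ℝ) else 1) := by
    apply Finset.prod_congr rfl
    intro i hi
    have hi' := Finset.mem_range.mp hi
    have h2 : N + 1 - 1 - i = (N - 1 - i) + 1 := by omega
    rw [h2, div_pow_succ']
  rw [hprod]; ring

lemma sum_double (f : ℕ → ℝ) (m : ℕ) :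
    ∑ j ∈ Finset.range (2 * m), f j = ∑ k ∈ Finset.range m, (f (2 * k) + f (2 * k + 1)) := by
  induction m with
  | zero => simp
  | succ m ih =>
    have h : 2 * (m + 1) = (2 * m + 1) + 1 := by ring
    rw [h, Finset.sum_range_succ, Finset.sum_range_succ, ih, Finset.sum_range_succ]
    ring

lemma Pprod_sum (ε : ℝ) (N : ℕ) :
    ∑ j ∈ Finset.range (2 ^ N), Pprod ε N j = 2 ^ N := by
  induction N with
  | zero => simp [Pprod]
  | succ N ih =>
    have h : (2:ℕ) ^ (N + 1) = 2 * 2 ^ N := by ring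
    rw [h, sum_double]
    have hc : ∀ k ∈ Finset.range (2 ^ N),
        Pprod ε (N+1) (2*k) + Pprod ε (N+1) (2*k+1) = 2 * Pprod ε N k := by
      intro k _
      rw [Pprod_left, Pprod_right]; ring
    rw [Finset.sum_congr rfl hc, ← Finset.mul_sum, ih]
    ring

lemma Pprod_cube (ε : ℝ) (N j : ℕ) :
    (Pprod ε N j) ^ 2 * Pprod (-ε) N j = (1 - ε ^ 2) ^ N * Pprod ε N j := by
  unfold Pprod
  rw [← Finset.prod_pow, ← Finset.prod_mul_distrib]
  have hfac : ∀ i ∈ Finset.range N,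
      (1 + ε * (if (j / 2 ^ (N - 1 - i)) % 2 = 0 then (-1:ℝ) else 1)) ^ 2 *
        (1 + (-ε) * (if (j / 2 ^ (N - 1 - i)) % 2 = 0 then (-1:ℝ) else 1))
      = (1 - ε ^ 2) * (1 + ε * (if (j / 2 ^ (N - 1 - i)) % 2 = 0 then (-1:ℝ) else 1)) := by
    intro i _
    split_ifs <;> ring
  rw [Finset.prod_congr rfl hfac, Finset.prod_mul_distrib, Finset.prod_const]
  simp

/-- The dyadic testing functional of the pair `(W(a,J,ε), W(1,J,−ε))` of weak-* limit weights
equals exactly `a²`: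
`γ(W(a,J,ε), W(1,J,−ε); J) = ∑_n ∑_{j<2ⁿ} 2^{-n}·((E_{I⁺}V − E_{I⁻}V)²/4)·E_I U
  = ε² a² ∑_{n=0}^∞ (1−ε²)ⁿ = a²`,
where the averages of the limit weights on depth-`n` intervals coincide with those of the
stage-`n` (resp. `n+1`) weights. -/
theorem stmt17 (ε a α L : ℝ) (hε : ε ∈ Ioo (0:ℝ) 1) (ha : 0 < a) (hL : 0 < L) :
    (∑' n : ℕ, ∑ j ∈ Finset.range (2 ^ n),
        ((2:ℝ) ^ n)⁻¹ *
          ((dyAvgW a ε α L (n + 1) (n + 1) (2 * j + 1) -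
              dyAvgW a ε α L (n + 1) (n + 1) (2 * j)) ^ 2 / 4) *
          dyAvgW 1 (-ε) α L n n j)
      = ε ^ 2 * a ^ 2 * ∑' n : ℕ, (1 - ε ^ 2) ^ n ∧
    (∑' n : ℕ, ∑ j ∈ Finset.range (2 ^ n),
        ((2:ℝ) ^ n)⁻¹ *
          ((dyAvgW a ε α L (n + 1) (n + 1) (2 * j + 1) -
              dyAvgW a ε α L (n + 1) (n + 1) (2 * j)) ^ 2 / 4) *
          dyAvgW 1 (-ε) α L n n j)
      = a ^ 2 := by
  have hgeom0 : (0:ℝ) ≤ 1 - ε ^ 2 := by nlinarith [hε.1, hε.2]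
  have hgeom1 : 1 - ε ^ 2 < 1 := by nlinarith [hε.1]
  have hεne : ε ≠ 0 := ne_of_gt hε.1
  have key : ∀ n : ℕ, (∑ j ∈ Finset.range (2 ^ n),
      ((2:ℝ) ^ n)⁻¹ *
        ((dyAvgW a ε α L (n + 1) (n + 1) (2 * j + 1) -
            dyAvgW a ε α L (n + 1) (n + 1) (2 * j)) ^ 2 / 4) *
        dyAvgW 1 (-ε) α L n n j)
      = ε ^ 2 * a ^ 2 * (1 - ε ^ 2) ^ n := by
    intro n
    have hterm : ∀ j ∈ Finset.range (2 ^ n),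
        ((2:ℝ) ^ n)⁻¹ *
          ((dyAvgW a ε α L (n + 1) (n + 1) (2 * j + 1) -
              dyAvgW a ε α L (n + 1) (n + 1) (2 * j)) ^ 2 / 4) *
          dyAvgW 1 (-ε) α L n n j
        = ((2:ℝ) ^ n)⁻¹ * (ε ^ 2 * a ^ 2 * (1 - ε ^ 2) ^ n) * Pprod ε n j := by
      intro j hj
      have hj' := Finset.mem_range.mp hj
      have hp : (2:ℕ) ^ (n + 1) = 2 * 2 ^ n := by ring
      have hj1 : 2 * j + 1 < 2 ^ (n + 1) := by omega
      have hj2 : 2 * j < 2 ^ (n + 1) := by omega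
      rw [avg_eq a ε α L hL (n+1) (2*j+1) hj1, avg_eq a ε α L hL (n+1) (2*j) hj2,
        avg_eq 1 (-ε) α L hL n j hj', Pprod_right, Pprod_left]
      linear_combination ((2:ℝ) ^ n)⁻¹ * ε ^ 2 * a ^ 2 * Pprod_cube ε n j
    rw [Finset.sum_congr rfl hterm, ← Finset.mul_sum, Pprod_sum]
    have h2n : (2:ℝ) ^ n ≠ 0 := by positivity
    field_simp
  have htsum : (∑' n : ℕ, ∑ j ∈ Finset.range (2 ^ n),
      ((2:ℝ) ^ n)⁻¹ *
        ((dyAvgW a ε α L (n + 1) (n + 1) (2 * j + 1) -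
            dyAvgW a ε α L (n + 1) (n + 1) (2 * j)) ^ 2 / 4) *
        dyAvgW 1 (-ε) α L n n j)
      = ε ^ 2 * a ^ 2 * ∑' n : ℕ, (1 - ε ^ 2) ^ n := by
    rw [tsum_congr key, tsum_mul_left]
  refine ⟨htsum, ?_⟩
  rw [htsum, tsum_geometric_of_lt_one hgeom0 hgeom1]
  have h : 1 - (1 - ε ^ 2) = ε ^ 2 := by ring
  rw [h]
  field_simp
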